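/- Suppose (K, g) is a continuous solution of K(u ∘_ρ v) = K(u) + g(u)K(v) on G_ρ(X), with K(u) ≠ 0 for some fixed u, and g(tu) ≠ 1 for all t ≠ 0 in the radial line through u, and K(tu) = λ_u(t)K(u) for a scalar function λ_u. Then (g(tu) − 1)·K(u) = (g(u) − 1)·K(tu) for all t with tu ∈ G_ρ(X). -/

import Mathlib

/-!
Collinear elements commute for `u ∘_ρ v = u + v + ρ(u) v`, so expanding `K(u ∘_ρ tu) = K(tu ∘_ρ u)`
with the functional equation in both orders gives `K u + g(u) K(tu) = K(tu) + g(tu) K u`.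
-/

section Circ

variable {X : Type*} [AddCommGroup X] [Module ℝ X]

/-- The product `u ∘_ρ v`. -/
def circ (ρ : X →ₗ[ℝ] ℝ) (u v : X) : X := u + v + ρ u • v

theorem circ_smul_self_comm (ρ : X →ₗ[ℝ] ℝ) (u : X) (t : ℝ) :
    circ ρ u (t • u) = circ ρ (t • u) u := by
  simp only [circ, map_smul, smul_smul, smul_eq_mul, mul_comm]
  abel

theorem sub_one_smul_eq_of_circ_comm {Y : Type*} [AddCommGroup Y] [Module ℝ Y]
    {ρ : X →ₗ[ℝ] ℝ} {K : X → Y} {g : X → ℝ} {v w : X}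
    (hGFE : ∀ v w, 1 + ρ v > 0 → 1 + ρ w > 0 → K (circ ρ v w) = K v + g v • K w)
    (hv : 1 + ρ v > 0) (hw : 1 + ρ w > 0) (hcomm : circ ρ v w = circ ρ w v) :
    (g v - 1) • K w = (g w - 1) • K v := by
  have hvw := hGFE v w hv hw
  rw [hcomm, hGFE w v hw hv] at hvw
  linear_combination (norm := module) -hvw

end Circ

theorem switching_lemma_general
    (X Y : Type*) [AddCommGroup X] [Module ℝ X] [AddCommGroup Y] [Module ℝ Y]
    (ρ : X →ₗ[ℝ] ℝ) (K : X → Y) (g : X → ℝ) (u : X)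
    (hu : 1 + ρ u > 0)
    (hGFE : ∀ v w, 1 + ρ v > 0 → 1 + ρ w > 0 →
        K (v + w + ρ v • w) = K v + g v • K w) :
    ∀ t : ℝ, 1 + ρ (t • u) > 0 →
      (g (t • u) - 1) • K u = (g u - 1) • K (t • u) :=
  fun t ht => sub_one_smul_eq_of_circ_comm hGFE ht hu (circ_smul_self_comm ρ u t).symm

theorem switching_lemma
    (X Y : Type*) [AddCommGroup X] [Module ℝ X] [AddCommGroup Y] [Module ℝ Y]
    (ρ : X →ₗ[ℝ] ℝ) (K : X → Y) (g : X → ℝ) (u : X)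
    (hu : 1 + ρ u > 0)
    (hKu : K u ≠ 0)
    (hg : ∀ t : ℝ, t ≠ 0 → 1 + ρ (t • u) > 0 → g (t • u) ≠ 1)
    (lam : ℝ → ℝ)
    (hrad : ∀ t : ℝ, 1 + ρ (t • u) > 0 → K (t • u) = lam t • K u)
    (hGFE : ∀ v w, 1 + ρ v > 0 → 1 + ρ w > 0 →
        K (v + w + ρ v • w) = K v + g v • K w) :
    ∀ t : ℝ, 1 + ρ (t • u) > 0 →
      (g (t • u) - 1) • K u = (g u - 1) • K (t • u) :=
  switching_lemma_general X Y ρ K g u hu hGFE
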